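/- Let 𝒫 be a finite group of permutations of a nonempty set X (a finite set of bijections of X, containing the identity, closed under composition and inverses). A functional A on the gambles on X is a weakly 𝒫-invariant coherent lower prevision (a coherent lower prevision satisfying A(f∘π) ≥ A(f) for all gambles f and all π ∈ 𝒫) if and only if there exists a coherent lower prevision L on X such that A(f) = (1/|𝒫|) Σ_{π∈𝒫} L(f∘π) for every gamble f on X. -/

import Mathlib

def IsGamble {X : Type*} (f : X → ℝ) : Prop :=
  BddAbove (Set.range f) ∧ BddBelow (Set.range f)

def IsCoherentLowerPrevision {X : Type*} (L : (X → ℝ) → ℝ) : Prop :=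
  (∀ f : X → ℝ, IsGamble f → sInf (Set.range f) ≤ L f) ∧
  (∀ f g : X → ℝ, IsGamble f → IsGamble g → L f + L g ≤ L (f + g)) ∧
  (∀ f : X → ℝ, IsGamble f → ∀ c : ℝ, 0 ≤ c → L (c • f) = c * L f)

def IsCoherentPrevision {X : Type*} (P : (X → ℝ) → ℝ) : Prop :=
  (∀ f g : X → ℝ, IsGamble f → IsGamble g → P (f + g) = P f + P g) ∧
  (∀ f : X → ℝ, IsGamble f → sInf (Set.range f) ≤ P f)

def IsTransformationMonoid {X : Type*} (𝒯 : Set (X → X)) : Prop :=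
  id ∈ 𝒯 ∧ ∀ S ∈ 𝒯, ∀ T ∈ 𝒯, S ∘ T ∈ 𝒯

def Dominating {X : Type*} (L : (X → ℝ) → ℝ) : Set ((X → ℝ) → ℝ) :=
  {P | IsCoherentPrevision P ∧ ∀ f : X → ℝ, IsGamble f → L f ≤ P f}

/-!
Weak invariance under a group is invariance: applying `A f ≤ A (f ∘ π)` to `π` and to its inverse
gives equality, so `A` is its own `𝒢`-average. Conversely, each `f ↦ L (f ∘ π)` is coherent
because `π` is onto, an average of coherent lower previsions is coherent, and the average is
invariant because `σ ↦ π ∘ σ` permutes `𝒢`.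
-/

open Finset
open scoped Pointwise

namespace IsGamble

variable {X : Type*} {f g : X → ℝ}

lemma comp (hf : IsGamble f) {Y : Type*} (π : Y → X) : IsGamble (f ∘ π) :=
  ⟨hf.1.mono (Set.range_comp_subset_range π f), hf.2.mono (Set.range_comp_subset_range π f)⟩

lemma add (hf : IsGamble f) (hg : IsGamble g) : IsGamble (f + g) := by
  have h : Set.range (f + g) ⊆ Set.range f + Set.range g := by
    rintro _ ⟨x, rfl⟩
    exact Set.add_mem_add ⟨x, rfl⟩ ⟨x, rfl⟩
  exact ⟨(hf.1.add hg.1).mono h, (hf.2.add hg.2).mono h⟩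

lemma smul (hf : IsGamble f) {c : ℝ} (hc : 0 ≤ c) : IsGamble (c • f) := by
  have h : Set.range (c • f) = c • Set.range f := Set.range_smul c f
  rw [IsGamble, h]
  exact ⟨hf.1.smul_of_nonneg hc, hf.2.smul_of_nonneg hc⟩

end IsGamble

namespace IsCoherentLowerPrevision

variable {X : Type*}

lemma congr {L A : (X → ℝ) → ℝ} (hL : IsCoherentLowerPrevision L)
    (h : ∀ f, IsGamble f → A f = L f) : IsCoherentLowerPrevision A := by
  obtain ⟨hinf, hadd, hsmul⟩ := hL
  refine ⟨fun f hf => ?_, fun f g hf hg => ?_, fun f hf c hc => ?_⟩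
  · rw [h f hf]
    exact hinf f hf
  · rw [h f hf, h g hg, h _ (hf.add hg)]
    exact hadd f g hf hg
  · rw [h f hf, h _ (hf.smul hc)]
    exact hsmul f hf c hc

lemma comp {L : (X → ℝ) → ℝ} (hL : IsCoherentLowerPrevision L) {Y : Type*} {π : X → Y}
    (hπ : Function.Surjective π) : IsCoherentLowerPrevision (fun f : Y → ℝ => L (f ∘ π)) := by
  obtain ⟨hinf, hadd, hsmul⟩ := hL
  refine ⟨fun f hf => ?_, fun f g hf hg => hadd _ _ (hf.comp π) (hg.comp π),
    fun f hf c hc => hsmul _ (hf.comp π) c hc⟩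
  rw [← hπ.range_comp f]
  exact hinf _ (hf.comp π)

lemma average {ι : Type*} {s : Finset ι} (hs : s.Nonempty) {L : ι → (X → ℝ) → ℝ}
    (hL : ∀ i ∈ s, IsCoherentLowerPrevision (L i)) :
    IsCoherentLowerPrevision (fun f => (∑ i ∈ s, L i f) / s.card) := by
  have hcard : (0 : ℝ) < s.card := by exact_mod_cast hs.card_pos
  refine ⟨fun f hf => ?_, fun f g hf hg => ?_, fun f hf c hc => ?_⟩
  · rw [le_div_iff₀ hcard, mul_comm, ← nsmul_eq_mul, ← sum_const]
    exact sum_le_sum fun i hi => (hL i hi).1 f hf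
  · rw [← add_div, ← sum_add_distrib]
    exact div_le_div_of_nonneg_right (sum_le_sum fun i hi => (hL i hi).2.1 f g hf hg) hcard.le
  · dsimp only
    rw [sum_congr rfl fun i hi => (hL i hi).2.2 f hf c hc, ← mul_sum, mul_div_assoc]

end IsCoherentLowerPrevision

section PermutationGroup

variable {X : Type*} {𝒢 : Finset (X → X)} {π ρ : X → X}

lemma sum_comp_left_of_comp_eq_id {M : Type*} [AddCommMonoid M]
    (hcomp : ∀ τ ∈ 𝒢, ∀ σ ∈ 𝒢, τ ∘ σ ∈ 𝒢) (hπ : π ∈ 𝒢) (hρ : ρ ∈ 𝒢)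
    (hπρ : π ∘ ρ = id) (hρπ : ρ ∘ π = id) (F : (X → X) → M) :
    ∑ σ ∈ 𝒢, F (π ∘ σ) = ∑ σ ∈ 𝒢, F σ :=
  sum_nbij' (π ∘ ·) (ρ ∘ ·) (fun σ hσ => hcomp π hπ σ hσ) (fun σ hσ => hcomp ρ hρ σ hσ)
    (fun σ _ => by rw [← Function.comp_assoc, hρπ, Function.id_comp])
    (fun σ _ => by rw [← Function.comp_assoc, hπρ, Function.id_comp])
    (fun _ _ => rfl)

lemma comp_eq_of_forall_le_comp {A : (X → ℝ) → ℝ}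
    (hA : ∀ g : X → ℝ, IsGamble g → ∀ τ ∈ 𝒢, A g ≤ A (g ∘ τ))
    (hπ : π ∈ 𝒢) (hρ : ρ ∈ 𝒢) (hπρ : π ∘ ρ = id) {f : X → ℝ} (hf : IsGamble f) :
    A (f ∘ π) = A f := by
  have h := hA (f ∘ π) (hf.comp π) ρ hρ
  rw [Function.comp_assoc, hπρ, Function.comp_id] at h
  exact le_antisymm h (hA f hf π hπ)

end PermutationGroup

theorem stmt18_general (X : Type*) (𝒢 : Finset (X → X))
    (hid : id ∈ 𝒢)
    (hcomp : ∀ π ∈ 𝒢, ∀ σ ∈ 𝒢, π ∘ σ ∈ 𝒢)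
    (hinvcl : ∀ π ∈ 𝒢, ∃ σ ∈ 𝒢, π ∘ σ = id ∧ σ ∘ π = id)
    (A : (X → ℝ) → ℝ) :
    (IsCoherentLowerPrevision A ∧
      ∀ f : X → ℝ, IsGamble f → ∀ π ∈ 𝒢, A f ≤ A (f ∘ π)) ↔
    (∃ L : (X → ℝ) → ℝ, IsCoherentLowerPrevision L ∧
      ∀ f : X → ℝ, IsGamble f →
        A f = (∑ π ∈ 𝒢, L (f ∘ π)) / (𝒢.card : ℝ)) := by
  have hcard : (𝒢.card : ℝ) ≠ 0 := by exact_mod_cast (card_pos.mpr ⟨id, hid⟩).ne'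
  constructor
  · rintro ⟨hA, hAinv⟩
    refine ⟨A, hA, fun f hf => ?_⟩
    have hAcomp : ∀ π ∈ 𝒢, A (f ∘ π) = A f := fun π hπ =>
      let ⟨_, hρ, hπρ, _⟩ := hinvcl π hπ
      comp_eq_of_forall_le_comp hAinv hπ hρ hπρ hf
    rw [sum_congr rfl hAcomp, sum_const, nsmul_eq_mul, mul_div_cancel_left₀ _ hcard]
  · rintro ⟨L, hL, hAL⟩
    have hsurj : ∀ π ∈ 𝒢, Function.Surjective π := fun π hπ =>
      let ⟨_, _, hπρ, _⟩ := hinvcl π hπ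
      Function.LeftInverse.surjective (congrFun hπρ)
    refine ⟨(IsCoherentLowerPrevision.average ⟨id, hid⟩ fun π hπ =>
      IsCoherentLowerPrevision.comp hL (hsurj π hπ)).congr hAL, fun f hf π hπ => le_of_eq ?_⟩
    obtain ⟨ρ, hρ, hπρ, hρπ⟩ := hinvcl π hπ
    rw [hAL f hf, hAL _ (hf.comp π)]
    exact congrArg (· / _) (sum_comp_left_of_comp_eq_id hcomp hπ hρ hπρ hρπ fun σ => L (f ∘ σ)).symm

theorem stmt18 (X : Type*) [Nonempty X] (𝒢 : Finset (X → X))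
    (hbij : ∀ π ∈ 𝒢, Function.Bijective π) (hid : id ∈ 𝒢)
    (hcomp : ∀ π ∈ 𝒢, ∀ σ ∈ 𝒢, π ∘ σ ∈ 𝒢)
    (hinvcl : ∀ π ∈ 𝒢, ∃ σ ∈ 𝒢, π ∘ σ = id ∧ σ ∘ π = id)
    (A : (X → ℝ) → ℝ) :
    (IsCoherentLowerPrevision A ∧
      ∀ f : X → ℝ, IsGamble f → ∀ π ∈ 𝒢, A f ≤ A (f ∘ π)) ↔
    (∃ L : (X → ℝ) → ℝ, IsCoherentLowerPrevision L ∧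
      ∀ f : X → ℝ, IsGamble f →
        A f = (∑ π ∈ 𝒢, L (f ∘ π)) / (𝒢.card : ℝ)) :=
  stmt18_general X 𝒢 hid hcomp hinvcl A
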